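/- arXiv:math/0608047 — 2 statements merged into one kernel-verified Lean document; each statement's English description precedes it below -/
import Mathlib

section
/- Let $\Theta$ be an $m\times m$ matrix with holomorphic entries near the origin in $\mathbb{C}^n$ of generic rank $m$. Then there exists an integer $\ell_0\geq 0$ and, for every integer $\ell\geq 0$, a polynomial map $q_\ell\colon\mathbb{C}^n\times J_0^{\ell_0+\ell}(\mathbb{C}^n,\mathbb{C}^m)\to\mathbb{C}^m$, homogeneous of degree $\ell$ in its first variable, such that for every germ of a holomorphic map $b\colon(\mathbb{C}^n,0)\to\mathbb{C}^m$: if $u\colon(\mathbb{C}^n,0)\to\mathbb{C}^m$ is a germ of a holomorphic map satisfying $\Theta(z)\cdot u(z)=b(z)$, then $u_\ell(z)=q_\ell(z, j_0^{\ell_0+\ell}b)$ for all $\ell\geq 0$, where $u_\ell$ is the homogeneous part of degree $\ell$ of $u$. -/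
/-!
Cramer's rule gives `det Θ • u = adj Θ *ᵥ (Θ *ᵥ u)`, and the order of power series is additive
on products; hence if the coefficients of `Θ u` vanish up to degree `N`, those of `u` vanish up
to degree `N - ord (det Θ)`. A linear form vanishing on the common kernel of finitely many linear
forms is a combination of them, so every coefficient of `u` of degree `d` is a fixed linear
combination of the coefficients of `b = Θ u` of degree at most `d + ord (det Θ)`. Pairing these
combinations with the monomials `z^a`, `|a| = ℓ`, gives `q ℓ`.
-/

noncomputable def homComp {n : ℕ} (m : ℕ) (F : MvPowerSeries (Fin n) ℂ) :
    MvPolynomial (Fin n) ℂ :=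
  ∑ a ∈ Finset.Nat.antidiagonalTuple n m,
    MvPolynomial.monomial (Finsupp.equivFunOnFinite.symm a)
      (MvPowerSeries.coeff (R := ℂ) (Finsupp.equivFunOnFinite.symm a) F)

/-- A formal power series with geometrically bounded coefficients, i.e. a convergent one
(a germ of a holomorphic function). -/
def IsConvPS {n : ℕ} (F : MvPowerSeries (Fin n) ℂ) : Prop :=
  ∃ C : ℝ, 0 < C ∧ ∀ a : Fin n →₀ ℕ,
    ‖MvPowerSeries.coeff (R := ℂ) a F‖ ≤ C ^ ((a.sum fun _ e => e) + 1)

namespace MvPowerSeries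

open Matrix

variable {σ ι R : Type*} [CommRing R] [NoZeroDivisors R] [Fintype ι] [DecidableEq ι]

theorem le_order_det_add_order_of_le_order_mulVec (Θ : Matrix ι ι (MvPowerSeries σ R))
    (u : ι → MvPowerSeries σ R) {N : ℕ∞} (hN : ∀ j, N ≤ ((Θ *ᵥ u) j).order) (i : ι) :
    N ≤ Θ.det.order + (u i).order := by
  have hadj : Θ.det * u i = ∑ j, Θ.adjugate i j * (Θ *ᵥ u) j := by
    have := congrFun (mulVec_mulVec u Θ.adjugate Θ) i
    rw [adjugate_mul, smul_mulVec, one_mulVec] at this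
    simpa [mulVec, dotProduct] using this.symm
  rw [← order_mul, hadj]
  refine le_order fun d hd => ?_
  rw [map_sum]
  refine Finset.sum_eq_zero fun j _ => coeff_of_lt_order ?_
  exact hd.trans_le ((hN j).trans (le_add_self.trans le_order_mul))

theorem coeff_eq_zero_of_coeff_mulVec_eq_zero {Θ : Matrix ι ι (MvPowerSeries σ R)}
    (hdet : Θ.det ≠ 0) {u : ι → MvPowerSeries σ R} {N : ℕ}
    (hu : ∀ j e, e.degree ≤ N → coeff e ((Θ *ᵥ u) j) = 0) {a : σ →₀ ℕ}
    (ha : a.degree + Θ.det.order.toNat ≤ N) (i : ι) : coeff a (u i) = 0 := by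
  have hN := le_order_det_add_order_of_le_order_mulVec Θ u (N := (N + 1 : ℕ))
    (fun j => nat_le_order fun e he => hu j e (Nat.lt_succ_iff.mp he)) i
  rw [← ne_zero_iff_order_finite.mp hdet] at hN
  refine coeff_of_lt_order (lt_of_not_ge fun hle => ?_)
  have : ((N + 1 : ℕ) : ℕ∞) ≤ ((Θ.det.order.toNat + a.degree : ℕ) : ℕ∞) :=
    hN.trans (by push_cast; gcongr)
  norm_cast at this
  omega

variable {𝕜 : Type*} [Field 𝕜] [Finite σ]

theorem exists_coeff_eq_sum_coeff_mulVec {Θ : Matrix ι ι (MvPowerSeries σ 𝕜)}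
    (hdet : Θ.det ≠ 0) (a : σ →₀ ℕ) (i : ι) :
    ∃ l : (σ →₀ ℕ) × ι →₀ 𝕜, (∀ x ∈ l.support, x.1.degree ≤ a.degree + Θ.det.order.toNat) ∧
      ∀ u, coeff a (u i) = l.sum fun x r => r * coeff x.1 ((Θ *ᵥ u) x.2) := by
  set N := a.degree + Θ.det.order.toNat
  let J : Set ((σ →₀ ℕ) × ι) := {x | x.1.degree ≤ N}
  have : Finite J := ((Finsupp.finite_of_degree_le N).prod Set.finite_univ).subset
    (fun x hx => ⟨hx, trivial⟩) |>.to_subtype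
  let L : (σ →₀ ℕ) × ι → Module.Dual 𝕜 (ι → MvPowerSeries σ 𝕜) := fun x =>
    (coeff x.1).comp ((LinearMap.proj x.2).comp ((mulVecLin Θ).restrictScalars 𝕜))
  have hspan : (coeff a).comp (LinearMap.proj i) ∈ Submodule.span 𝕜 (L '' J) := by
    rw [Set.image_eq_range]
    refine mem_span_of_iInf_ker_le_ker fun u hu => ?_
    simp only [Submodule.mem_iInf, LinearMap.mem_ker] at hu
    exact coeff_eq_zero_of_coeff_mulVec_eq_zero hdet (fun j e he => hu ⟨(e, j), he⟩) le_rfl i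
  obtain ⟨l, hlJ, hl⟩ := Finsupp.mem_span_image_iff_linearCombination 𝕜 |>.mp hspan
  refine ⟨l, fun x hx => hlJ hx, fun u => ?_⟩
  have hu := LinearMap.congr_fun hl u
  rw [Finsupp.linearCombination_apply] at hu
  simpa [Finsupp.sum, L] using hu.symm

end MvPowerSeries

namespace MvPolynomial

open Finsupp

variable {σ κ R : Type*} [CommSemiring R]

/-- `∑_{a ∈ S} z^a ⬝ ∑_x (c a x) w_x` in the variables `z = (X (inl v))_v`, `w = (X (inr x))_x`. -/
noncomputable def sumMonomialMulLinear (S : Finset (σ →₀ ℕ)) (c : (σ →₀ ℕ) → κ →₀ R) :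
    MvPolynomial (σ ⊕ κ) R :=
  ∑ a ∈ S, ∑ x ∈ (c a).support, monomial (a.mapDomain Sum.inl + single (Sum.inr x) 1) (c a x)

theorem exists_eq_of_mem_support_sumMonomialMulLinear {S : Finset (σ →₀ ℕ)}
    {c : (σ →₀ ℕ) → κ →₀ R} {mo : σ ⊕ κ →₀ ℕ} (hmo : mo ∈ (sumMonomialMulLinear S c).support) :
    ∃ a ∈ S, ∃ x ∈ (c a).support, mo = a.mapDomain Sum.inl + single (Sum.inr x) 1 := by
  classical
  obtain ⟨a, ha, hmo⟩ := Finset.mem_biUnion.mp (support_sum hmo)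
  obtain ⟨x, hx, hmo⟩ := Finset.mem_biUnion.mp (support_sum hmo)
  exact ⟨a, ha, x, hx, Finset.mem_singleton.mp (support_monomial_subset hmo)⟩

theorem sum_inl_of_mem_support_sumMonomialMulLinear [Fintype σ] {S : Finset (σ →₀ ℕ)} {ℓ : ℕ}
    (hS : ∀ a ∈ S, a.degree = ℓ) {c : (σ →₀ ℕ) → κ →₀ R} {mo : σ ⊕ κ →₀ ℕ}
    (hmo : mo ∈ (sumMonomialMulLinear S c).support) : ∑ v, mo (Sum.inl v) = ℓ := by
  obtain ⟨a, ha, x, -, rfl⟩ := exists_eq_of_mem_support_sumMonomialMulLinear hmo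
  simp [mapDomain_apply Sum.inl_injective, ← hS a ha, degree_eq_sum]

theorem of_inr_mem_vars_sumMonomialMulLinear {S : Finset (σ →₀ ℕ)} {c : (σ →₀ ℕ) → κ →₀ R}
    {P : κ → Prop} (hc : ∀ a ∈ S, ∀ x ∈ (c a).support, P x) {x : κ}
    (hx : Sum.inr x ∈ (sumMonomialMulLinear S c).vars) : P x := by
  classical
  obtain ⟨mo, hmo, hxmo⟩ := (mem_vars_iff_mem_support _).mp hx
  obtain ⟨a, ha, y, hy, rfl⟩ := exists_eq_of_mem_support_sumMonomialMulLinear hmo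
  rcases Finset.mem_union.mp (Finsupp.support_add hxmo) with h | h
  · obtain ⟨v, -, hv⟩ := Finset.mem_image.mp (mapDomain_support h)
    exact absurd hv Sum.inl_ne_inr
  · rw [support_single _ one_ne_zero, Finset.mem_singleton, Sum.inr.injEq] at h
    exact h ▸ hc a ha y hy

theorem eval_sumMonomialMulLinear (S : Finset (σ →₀ ℕ)) (c : (σ →₀ ℕ) → κ →₀ R) (z : σ → R)
    (w : κ → R) :
    eval (Sum.elim z w) (sumMonomialMulLinear S c) =
      ∑ a ∈ S, ((c a).sum fun x r => r * w x) * a.prod fun v e => z v ^ e := by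
  simp only [sumMonomialMulLinear, map_sum, eval_monomial, Finset.sum_mul, Finsupp.sum]
  refine Finset.sum_congr rfl fun a _ => Finset.sum_congr rfl fun x _ => ?_
  rw [prod_add_index' (fun _ => pow_zero _) (fun _ _ _ => pow_add _ _ _),
    prod_mapDomain_index_inj Sum.inl_injective,
    Finsupp.prod_single_index (h := fun s e => Sum.elim z w s ^ e) (pow_zero _)]
  simp only [Sum.elim_inl, Sum.elim_inr, pow_one]
  ring

end MvPolynomial

open Finsupp in
/-- The exponents of total degree `ℓ`, enumerated as in `homComp`. -/
noncomputable def homogeneousExponents (n ℓ : ℕ) : Finset (Fin n →₀ ℕ) :=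
  (Finset.Nat.antidiagonalTuple n ℓ).map equivFunOnFinite.symm.toEmbedding

theorem degree_of_mem_homogeneousExponents {n ℓ : ℕ} {a : Fin n →₀ ℕ}
    (ha : a ∈ homogeneousExponents n ℓ) : a.degree = ℓ := by
  obtain ⟨a, hmem, rfl⟩ := Finset.mem_map.mp ha
  simpa [Finsupp.degree_eq_sum] using Finset.Nat.mem_antidiagonalTuple.mp hmem

theorem eval_homComp {n : ℕ} (ℓ : ℕ) (F : MvPowerSeries (Fin n) ℂ) (z : Fin n → ℂ) :
    MvPolynomial.eval z (homComp ℓ F) =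
      ∑ a ∈ homogeneousExponents n ℓ, MvPowerSeries.coeff a F * a.prod fun v e => z v ^ e := by
  simp only [homComp, homogeneousExponents, Finset.sum_map, map_sum, MvPolynomial.eval_monomial]
  rfl

theorem stmt15_general (n m : ℕ)
    (Θ : Matrix (Fin m) (Fin m) (MvPowerSeries (Fin n) ℂ))
    (hdet : Θ.det ≠ 0) :
    ∃ ℓ0 : ℕ, ∃ q : ℕ → Fin m → MvPolynomial (Fin n ⊕ ((Fin n →₀ ℕ) × Fin m)) ℂ,
      -- homogeneity of degree ℓ in the first variable z
      (∀ ℓ i, ∀ mo ∈ (q ℓ i).support, (∑ v : Fin n, mo (Sum.inl v)) = ℓ) ∧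
      -- q ℓ depends only on the (ℓ0+ℓ)-jet of b
      (∀ ℓ i, ∀ v ∈ (q ℓ i).vars, ∀ jx : (Fin n →₀ ℕ) × Fin m, v = Sum.inr jx →
        (jx.1.sum fun _ e => e) ≤ ℓ0 + ℓ) ∧
      ∀ (b u : Fin m → MvPowerSeries (Fin n) ℂ),
        (∀ i, IsConvPS (b i)) → (∀ i, IsConvPS (u i)) →
        (∀ i, ∑ j, Θ i j * u j = b i) →
        ∀ ℓ : ℕ, ∀ i, ∀ z : Fin n → ℂ,
          MvPolynomial.eval z (homComp ℓ (u i)) =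
            MvPolynomial.eval
              (Sum.elim z fun jx => MvPowerSeries.coeff (R := ℂ) jx.1 (b jx.2)) (q ℓ i) := by
  choose c hc_deg hc using MvPowerSeries.exists_coeff_eq_sum_coeff_mulVec hdet
  refine ⟨Θ.det.order.toNat,
    fun ℓ i => MvPolynomial.sumMonomialMulLinear (homogeneousExponents n ℓ) (c · i),
    fun ℓ i mo hmo => ?_, fun ℓ i v hv jx hjx => ?_, fun b u _ _ hsys ℓ i z => ?_⟩
  · exact MvPolynomial.sum_inl_of_mem_support_sumMonomialMulLinear
      (fun a ha => degree_of_mem_homogeneousExponents ha) hmo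
  · subst hjx
    refine MvPolynomial.of_inr_mem_vars_sumMonomialMulLinear (P := fun x => x.1.degree ≤ _)
      (fun a ha x hx => ?_) hv
    rw [add_comm, ← degree_of_mem_homogeneousExponents ha]
    exact hc_deg a i x hx
  · have hb : Θ.mulVec u = b := funext hsys
    rw [eval_homComp, MvPolynomial.eval_sumMonomialMulLinear]
    refine Finset.sum_congr rfl fun a _ => ?_
    rw [hc a i u, hb]

/-- parametrization of solutions of the linear singular system
`Θ(z) ⋅ u(z) = b(z)`: each homogeneous part `u_ℓ` is given by a universal polynomial map,
homogeneous of degree `ℓ` in `z`, of the `(ℓ₀+ℓ)`-jet of `b` at the origin. -/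
theorem stmt15 (n m : ℕ)
    (Θ : Matrix (Fin m) (Fin m) (MvPowerSeries (Fin n) ℂ))
    (hconv : ∀ i j, IsConvPS (Θ i j))
    (hdet : Θ.det ≠ 0) :
    ∃ ℓ0 : ℕ, ∃ q : ℕ → Fin m → MvPolynomial (Fin n ⊕ ((Fin n →₀ ℕ) × Fin m)) ℂ,
      -- homogeneity of degree ℓ in the first variable z
      (∀ ℓ i, ∀ mo ∈ (q ℓ i).support, (∑ v : Fin n, mo (Sum.inl v)) = ℓ) ∧
      -- q ℓ depends only on the (ℓ0+ℓ)-jet of b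
      (∀ ℓ i, ∀ v ∈ (q ℓ i).vars, ∀ jx : (Fin n →₀ ℕ) × Fin m, v = Sum.inr jx →
        (jx.1.sum fun _ e => e) ≤ ℓ0 + ℓ) ∧
      ∀ (b u : Fin m → MvPowerSeries (Fin n) ℂ),
        (∀ i, IsConvPS (b i)) → (∀ i, IsConvPS (u i)) →
        (∀ i, ∑ j, Θ i j * u j = b i) →
        ∀ ℓ : ℕ, ∀ i, ∀ z : Fin n → ℂ,
          MvPolynomial.eval z (homComp ℓ (u i)) =
            MvPolynomial.eval
              (Sum.elim z fun jx => MvPowerSeries.coeff (R := ℂ) jx.1 (b jx.2)) (q ℓ i) :=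
  stmt15_general n m Θ hdet
end

section
/- Let $A\colon(\mathbb{C}^n,0)\to(\mathbb{C}^n,0)$ be a germ of a holomorphic map of generic rank $n$ whose lowest-order homogeneous terms all have the same degree $\ell_0+1$ and form a map $A_0$ with $\det A_0'\not\equiv 0$. Define $\tilde p_1(z)=z$ and recursively $\tilde p_\ell(z,j_0^{\ell_0+\ell}b) = B_\ell\big(b_{\ell_0+\ell}(z) - A(P^{\ell-1}(z))|_{\ell_0+\ell}\big)$ where $P^{\ell-1}=\sum_{k<\ell}\tilde p_k$ and $B_\ell$ is a left inverse to multiplication by $A_0'$ on homogeneous polynomial maps. Then for any germ of a holomorphic map $b$ and any germ of a biholomorphism $u$ tangent to the identity (i.e. $u'(0)=\mathrm{id}$) with $A(u(z))=b(z)$, one has $u_\ell = \tilde p_\ell(\cdot, j_0^{\ell_0+\ell}b)$ for every $\ell\geq 1$. -/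
noncomputable def psComp {n N : ℕ} (F : MvPowerSeries (Fin n) ℂ)
    (g : Fin n → MvPowerSeries (Fin N) ℂ) : MvPowerSeries (Fin N) ℂ :=
  fun a => ∑ d ∈ Finset.range ((a.sum fun _ e => e) + 1),
    MvPowerSeries.coeff (R := ℂ) a (MvPolynomial.aeval g (homComp d F))

/-- A polynomial viewed as a formal power series. -/
noncomputable def polyPS {n : ℕ} (p : MvPolynomial (Fin n) ℂ) : MvPowerSeries (Fin n) ℂ :=
  MvPolynomial.aeval (fun i => (MvPowerSeries.X i : MvPowerSeries (Fin n) ℂ)) p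

/-!
Induction on `ℓ`; the case `ℓ = 1` is tangency to the identity. For `ℓ ≥ 2` the induction
hypothesis identifies `P^{ℓ-1}` with the truncation `g` of `u` below degree `ℓ`, so
`u ≡ g + u_ℓ` modulo order `ℓ + 1`. Expanding a homogeneous part `A_d` of `A` to first order at
`g` gives `A_d(u) - A_d(g) ≡ A_d'(z) · u_ℓ` modulo order `d + ℓ`: the Taylor remainder has order
`d + 2ℓ - 2`, and replacing `A_d'(g)` by `A_d'(z)` costs order `d + ℓ`. In degree `ℓ₀ + ℓ` only
`d = ℓ₀ + 1` survives, so the degree `ℓ₀ + ℓ` part of `b - A(g)` is `A₀' · u_ℓ`, and `B_ℓ`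
returns `u_ℓ`.
-/

namespace MvPowerSeries

variable {σ R : Type*} [CommRing R]

def orderIdeal (k : ℕ) : Ideal (MvPowerSeries σ R) where
  carrier := {f | (k : ℕ∞) ≤ f.order}
  add_mem' hf hg := (le_min hf hg).trans min_order_le_add
  zero_mem' := by simp
  smul_mem' _ _ hf := hf.trans (le_add_self.trans le_order_mul)

variable {f g : MvPowerSeries σ R} {k l : ℕ}

theorem mem_orderIdeal : f ∈ orderIdeal k ↔ (k : ℕ∞) ≤ f.order := Iff.rfl

theorem orderIdeal_antitone : Antitone (orderIdeal : ℕ → Ideal (MvPowerSeries σ R)) :=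
  fun _ _ h _ hf => mem_orderIdeal.2 ((Nat.cast_le.2 h).trans (mem_orderIdeal.1 hf))

theorem orderIdeal_zero : (orderIdeal 0 : Ideal (MvPowerSeries σ R)) = ⊤ :=
  eq_top_iff.2 fun f _ => by simp [mem_orderIdeal]

theorem mul_mem_orderIdeal (hf : f ∈ orderIdeal k) (hg : g ∈ orderIdeal l) :
    f * g ∈ orderIdeal (k + l) := by
  rw [mem_orderIdeal, Nat.cast_add]
  exact (add_le_add hf hg).trans le_order_mul

theorem prod_mem_orderIdeal {ι : Type*} {s : Finset ι} {f : ι → MvPowerSeries σ R}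
    {k : ι → ℕ} (h : ∀ i ∈ s, f i ∈ orderIdeal (k i)) :
    ∏ i ∈ s, f i ∈ orderIdeal (∑ i ∈ s, k i) := by
  classical
  induction s using Finset.induction_on with
  | empty => simp [orderIdeal_zero]
  | insert a s ha ih =>
    rw [Finset.prod_insert ha, Finset.sum_insert ha]
    exact mul_mem_orderIdeal (h a (Finset.mem_insert_self a s))
      (ih fun i hi => h i (Finset.mem_insert_of_mem hi))

theorem pow_mem_orderIdeal (hf : f ∈ orderIdeal k) (m : ℕ) : f ^ m ∈ orderIdeal (m * k) := by
  simpa using prod_mem_orderIdeal (s := Finset.range m) fun _ _ => hf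

theorem coeff_eq_zero_of_mem_orderIdeal (hf : f ∈ orderIdeal k) {d : σ →₀ ℕ}
    (hd : d.degree < k) : coeff d f = 0 :=
  coeff_of_lt_order ((Nat.cast_lt.2 hd).trans_le hf)

theorem coeff_eq_of_sub_mem_orderIdeal (h : f - g ∈ orderIdeal k) {d : σ →₀ ℕ}
    (hd : d.degree < k) : coeff d f = coeff d g :=
  sub_eq_zero.1 (by rw [← map_sub]; exact coeff_eq_zero_of_mem_orderIdeal h hd)

theorem X_mem_orderIdeal_one (i : σ) : (X i : MvPowerSeries σ R) ∈ orderIdeal 1 :=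
  nat_le_order fun d hd => by
    classical
    rw [coeff_X, if_neg]
    rintro rfl
    simp at hd

theorem sub_X_mem_orderIdeal_two [DecidableEq σ] {F : MvPowerSeries σ R} {i : σ}
    (h0 : constantCoeff F = 0) (h1 : ∀ j, coeff (Finsupp.single j 1) F = if i = j then 1 else 0) :
    F - X i ∈ orderIdeal 2 := by
  refine nat_le_order fun d hd => ?_
  obtain hd0 | hd1 : d.degree = 0 ∨ d.degree = 1 := by omega
  · rw [Finsupp.degree_eq_zero_iff] at hd0
    subst hd0
    simp [h0]
  · obtain ⟨j, rfl⟩ : d ∈ Set.range fun a => Finsupp.single a 1 :=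
      Finsupp.range_single_one (σ := σ) ▸ hd1
    simp [h1, coeff_X, Finsupp.single_left_inj one_ne_zero, eq_comm]

end MvPowerSeries

theorem Finsupp.weight_one_eq_degree {σ : Type*} (d : σ →₀ ℕ) :
    Finsupp.weight 1 d = d.degree := by
  rw [Finsupp.degree_eq_weight_one, Pi.one_def]

namespace MvPolynomial

variable {σ τ R : Type*} [CommRing R]

theorem IsHomogeneous.of_mul_X {q : MvPolynomial σ R} {i : σ} {e : ℕ}
    (h : (q * X i).IsHomogeneous (e + 1)) : q.IsHomogeneous e := by
  intro m hm
  have := h (d := m + Finsupp.single i 1) (by rwa [coeff_mul_X])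
  simpa [Finsupp.weight_one_eq_degree] using this

theorem IsHomogeneous.eq_zero_of_mul_X {q : MvPolynomial σ R} {i : σ}
    (h : (q * X i).IsHomogeneous 0) : q = 0 := by
  ext m
  by_contra hm
  have := h (d := m + Finsupp.single i 1) (by rwa [coeff_mul_X])
  simp [Finsupp.weight_one_eq_degree] at this

theorem aeval_mem_orderIdeal {p : MvPolynomial σ R} {e : ℕ} (hp : p.IsHomogeneous e)
    {x : σ → MvPowerSeries τ R} (hx : ∀ i, x i ∈ MvPowerSeries.orderIdeal 1) :
    aeval x p ∈ MvPowerSeries.orderIdeal e := by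
  induction hp using IsWeightedHomogeneous.induction_on with
  | zero => simp
  | add p q _ _ hp hq => rw [map_add]; exact add_mem hp hq
  | monomial d r hd =>
    rw [aeval_monomial]
    refine Ideal.mul_mem_left _ _ ?_
    rw [← hd, Finsupp.weight_one_eq_degree, Finsupp.degree_apply]
    exact MvPowerSeries.prod_mem_orderIdeal fun i _ => by
      simpa using MvPowerSeries.pow_mem_orderIdeal (hx i) (d i)

section Taylor

variable {S : Type*} [CommRing S] [Algebra R S] [Fintype σ]

noncomputable def taylorRemainder (x r : σ → S) (p : MvPolynomial σ R) : S :=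
  aeval (x + r) p - aeval x p - ∑ i, aeval x (pderiv i p) * r i

variable (x r : σ → S)

theorem taylorRemainder_add (p q : MvPolynomial σ R) :
    taylorRemainder x r (p + q) = taylorRemainder x r p + taylorRemainder x r q := by
  simp only [taylorRemainder, map_add, add_mul, Finset.sum_add_distrib]
  ring

theorem taylorRemainder_C (a : R) : taylorRemainder x r (C a : MvPolynomial σ R) = 0 := by
  simp [taylorRemainder]

theorem taylorRemainder_mul_X (q : MvPolynomial σ R) (i : σ) :
    taylorRemainder x r (q * X i) =
      taylorRemainder x r q * (x i + r i) + (∑ j, aeval x (pderiv j q) * r j) * r i := by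
  classical
  have linear_part : ∑ j, aeval x (pderiv j (q * X i)) * r j =
      aeval x q * r i + (∑ j, aeval x (pderiv j q) * r j) * x i := by
    simp only [Derivation.leibniz, smul_eq_mul, map_add, map_mul, aeval_X, add_mul,
      Finset.sum_add_distrib, Finset.sum_mul]
    congr 1
    · simp [pderiv_X, Pi.single_apply]
    · exact Finset.sum_congr rfl fun _ _ => by ring
  rw [taylorRemainder, taylorRemainder, linear_part, map_mul, map_mul, aeval_X, aeval_X]
  simp only [Pi.add_apply]
  ring

end Taylor

section OrderBounds

open MvPowerSeries

variable [Fintype σ] {x r : σ → MvPowerSeries τ R} {p : MvPolynomial σ R} {e k : ℕ}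

theorem sum_aeval_pderiv_mul_mem_orderIdeal (hp : p.IsHomogeneous e)
    (hx : ∀ i, x i ∈ orderIdeal 1) (hr : ∀ i, r i ∈ orderIdeal k) :
    ∑ i, aeval x (pderiv i p) * r i ∈ orderIdeal (e - 1 + k) :=
  Ideal.sum_mem _ fun i _ => mul_mem_orderIdeal (aeval_mem_orderIdeal hp.pderiv hx) (hr i)

theorem taylorRemainder_mem_orderIdeal (hp : p.IsHomogeneous e)
    (hx : ∀ i, x i ∈ orderIdeal 1) (hr : ∀ i, r i ∈ orderIdeal (k + 1)) :
    taylorRemainder x r p ∈ orderIdeal (e + 2 * k) := by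
  have hxr : ∀ i, x i + r i ∈ orderIdeal 1 := fun i =>
    add_mem (hx i) (orderIdeal_antitone (by omega) (hr i))
  have monomial_case : ∀ s a e, (monomial s a : MvPolynomial σ R).IsHomogeneous e →
      taylorRemainder x r (monomial s a) ∈ orderIdeal (e + 2 * k) := by
    refine induction_on_monomial (fun a _ _ => by simp [taylorRemainder_C]) ?_
    intro q i ih e hqi
    cases e with
    | zero => simp [hqi.eq_zero_of_mul_X, taylorRemainder]
    | succ e =>
      have hq := hqi.of_mul_X
      rw [taylorRemainder_mul_X]
      refine add_mem (orderIdeal_antitone (by omega) (mul_mem_orderIdeal (ih e hq) (hxr i)))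
        (orderIdeal_antitone ?_ (mul_mem_orderIdeal
          (sum_aeval_pderiv_mul_mem_orderIdeal hq hx hr) (hr i)))
      omega
  induction hp using IsWeightedHomogeneous.induction_on with
  | zero => simp [taylorRemainder]
  | add p q _ _ hp hq => rw [taylorRemainder_add]; exact add_mem hp hq
  | monomial d a hd => exact monomial_case d a e (isWeightedHomogeneous_monomial _ d a hd)

theorem aeval_add_sub_aeval_mem_orderIdeal (hp : p.IsHomogeneous e)
    (hx : ∀ i, x i ∈ orderIdeal 1) (hr : ∀ i, r i ∈ orderIdeal (k + 1)) :
    aeval (x + r) p - aeval x p ∈ orderIdeal (e + k) := by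
  have h := add_mem
    (orderIdeal_antitone (show e + k ≤ e + 2 * k by omega)
      (taylorRemainder_mem_orderIdeal hp hx hr))
    (orderIdeal_antitone (show e + k ≤ e - 1 + (k + 1) by omega)
      (sum_aeval_pderiv_mul_mem_orderIdeal hp hx hr))
  rwa [taylorRemainder, sub_add_cancel] at h

theorem aeval_sub_aeval_sub_sum_pderiv_mem_orderIdeal {p : MvPolynomial σ R} {d ℓ : ℕ}
    (hp : p.IsHomogeneous d) (hℓ : 2 ≤ ℓ) {u g v : σ → MvPowerSeries σ R}
    (hu : ∀ j, u j - MvPowerSeries.X j ∈ orderIdeal 2) (hv : ∀ j, v j ∈ orderIdeal ℓ)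
    (huv : ∀ j, u j - g j - v j ∈ orderIdeal (ℓ + 1)) :
    aeval u p - aeval g p - ∑ j, aeval MvPowerSeries.X (pderiv j p) * v j ∈
      orderIdeal (d + ℓ) := by
  have hgX : ∀ j, g j - MvPowerSeries.X j ∈ orderIdeal (1 + 1) := fun j => by
    have h := sub_mem (sub_mem (hu j) (orderIdeal_antitone (by omega) (huv j)))
      (orderIdeal_antitone (by omega) (hv j))
    rwa [show u j - MvPowerSeries.X j - (u j - g j - v j) - v j = g j - MvPowerSeries.X j by ring]
      at h
  have hg : ∀ j, g j ∈ orderIdeal 1 := fun j => by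
    simpa using add_mem (X_mem_orderIdeal_one j) (orderIdeal_antitone (by omega) (hgX j))
  have hr : ∀ j, (u - g) j ∈ orderIdeal (ℓ - 1 + 1) := fun j => by
    rw [Nat.sub_add_cancel (by omega : 1 ≤ ℓ), Pi.sub_apply, ← sub_add_cancel (u j - g j) (v j)]
    exact add_mem (orderIdeal_antitone (by omega) (huv j)) (hv j)
  have remainder := taylorRemainder_mem_orderIdeal hp hg hr
  have first_order := sum_aeval_pderiv_mul_mem_orderIdeal hp hg huv
  have base_change : ∑ j, (aeval g (pderiv j p) - aeval MvPowerSeries.X (pderiv j p)) * v j ∈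
      orderIdeal (d - 1 + 1 + ℓ) := Ideal.sum_mem _ fun j _ => by
    have h := aeval_add_sub_aeval_mem_orderIdeal (x := MvPowerSeries.X)
      (r := g - MvPowerSeries.X) (hp.pderiv (i := j)) X_mem_orderIdeal_one hgX
    rw [add_sub_cancel] at h
    exact mul_mem_orderIdeal h (hv j)
  have split : aeval u p - aeval g p - ∑ j, aeval MvPowerSeries.X (pderiv j p) * v j =
      taylorRemainder g (u - g) p + ∑ j, aeval g (pderiv j p) * (u j - g j - v j) +
        ∑ j, (aeval g (pderiv j p) - aeval MvPowerSeries.X (pderiv j p)) * v j := by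
    rw [taylorRemainder, add_sub_cancel]
    simp only [Pi.sub_apply, mul_sub, sub_mul, Finset.sum_sub_distrib]
    abel
  rw [split]
  exact add_mem (add_mem (orderIdeal_antitone (by omega) remainder)
    (orderIdeal_antitone (by omega) first_order)) (orderIdeal_antitone (by omega) base_change)

end OrderBounds

end MvPolynomial

section Composition

open MvPowerSeries

variable {n : ℕ}

theorem coeff_homComp (m : ℕ) (F : MvPowerSeries (Fin n) ℂ) (c : Fin n →₀ ℕ) :
    MvPolynomial.coeff c (homComp m F) = if c.degree = m then coeff c F else 0 := by
  classical
  simp [homComp, MvPolynomial.coeff_sum, MvPolynomial.coeff_monomial, Equiv.symm_apply_eq,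
    Finset.Nat.mem_antidiagonalTuple, Finsupp.degree_eq_sum]

theorem homComp_isHomogeneous (m : ℕ) (F : MvPowerSeries (Fin n) ℂ) :
    (homComp m F).IsHomogeneous m := by
  intro c hc
  rw [coeff_homComp] at hc
  rw [Finsupp.weight_one_eq_degree]
  by_contra h
  exact hc (if_neg h)

theorem homComp_congr {m : ℕ} {F G : MvPowerSeries (Fin n) ℂ}
    (h : ∀ c : Fin n →₀ ℕ, c.degree = m → coeff c F = coeff c G) : homComp m F = homComp m G := by
  ext c
  rw [coeff_homComp, coeff_homComp]
  split_ifs with hc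
  exacts [h c hc, rfl]

theorem homComp_sub (m : ℕ) (F G : MvPowerSeries (Fin n) ℂ) :
    homComp m (F - G) = homComp m F - homComp m G := by
  ext c
  simp only [MvPolynomial.coeff_sub, coeff_homComp, map_sub]
  split_ifs <;> simp

theorem homComp_eq_of_sub_mem_orderIdeal {m : ℕ} {F G : MvPowerSeries (Fin n) ℂ}
    (h : F - G ∈ orderIdeal (m + 1)) : homComp m F = homComp m G :=
  homComp_congr fun _ hc => coeff_eq_of_sub_mem_orderIdeal h (by omega)

theorem coeff_psComp {N : ℕ} (F : MvPowerSeries (Fin n) ℂ) (g : Fin n → MvPowerSeries (Fin N) ℂ)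
    (c : Fin N →₀ ℕ) :
    coeff c (psComp F g) =
      ∑ d ∈ Finset.range (c.degree + 1), coeff c (MvPolynomial.aeval g (homComp d F)) :=
  rfl

theorem polyPS_eq_coe (p : MvPolynomial (Fin n) ℂ) : polyPS p = ↑p := by
  have : MvPolynomial.aeval X =
      (MvPolynomial.coeToMvPowerSeries.algHom ℂ : MvPolynomial (Fin n) ℂ →ₐ[ℂ] _) :=
    MvPolynomial.algHom_ext fun i => by simp
  exact DFunLike.congr_fun this p

theorem coeff_polyPS (p : MvPolynomial (Fin n) ℂ) (c : Fin n →₀ ℕ) :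
    coeff c (polyPS p) = p.coeff c := by
  rw [polyPS_eq_coe, MvPolynomial.coeff_coe]

theorem homComp_polyPS {m : ℕ} {P : MvPolynomial (Fin n) ℂ} (hP : P.IsHomogeneous m) :
    homComp m (polyPS P) = P := by
  ext c
  rw [coeff_homComp, coeff_polyPS]
  split_ifs with hc
  exacts [rfl, (hP.coeff_eq_zero hc).symm]

theorem homComp_one_X (i : Fin n) : homComp 1 (X i) = MvPolynomial.X i := by
  simpa [polyPS] using homComp_polyPS (MvPolynomial.isHomogeneous_X ℂ i)

theorem polyPS_homComp_mem_orderIdeal (m : ℕ) (F : MvPowerSeries (Fin n) ℂ) :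
    polyPS (homComp m F) ∈ orderIdeal m :=
  MvPolynomial.aeval_mem_orderIdeal (homComp_isHomogeneous m F) X_mem_orderIdeal_one

theorem coeff_polyPS_sum_homComp (s : Finset ℕ) (F : MvPowerSeries (Fin n) ℂ) (c : Fin n →₀ ℕ) :
    coeff c (polyPS (∑ k ∈ s, homComp k F)) = if c.degree ∈ s then coeff c F else 0 := by
  simp [coeff_polyPS, MvPolynomial.coeff_sum, coeff_homComp]

theorem sub_truncation_mem_orderIdeal {F : MvPowerSeries (Fin n) ℂ} (hF : constantCoeff F = 0)
    (ℓ : ℕ) :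
    F - polyPS (∑ k ∈ Finset.Icc 1 (ℓ - 1), homComp k F) - polyPS (homComp ℓ F) ∈
      orderIdeal (ℓ + 1) := by
  refine nat_le_order fun c hc => ?_
  rw [map_sub, map_sub, coeff_polyPS_sum_homComp, coeff_polyPS, coeff_homComp]
  simp only [Finset.mem_Icc]
  obtain hc0 | hcpos := Nat.eq_zero_or_pos c.degree
  · rw [Finsupp.degree_eq_zero_iff] at hc0
    subst hc0
    simp [hF]
  · split_ifs <;> first | (exfalso; omega) | simp

theorem coeff_psComp_sub_coeff_psComp {ℓ0 ℓ : ℕ} {F : MvPowerSeries (Fin n) ℂ}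
    (hF : ∀ m ≤ ℓ0, homComp m F = 0) (hℓ : 2 ≤ ℓ) {u g v : Fin n → MvPowerSeries (Fin n) ℂ}
    (hu : ∀ j, u j - X j ∈ orderIdeal 2) (hv : ∀ j, v j ∈ orderIdeal ℓ)
    (huv : ∀ j, u j - g j - v j ∈ orderIdeal (ℓ + 1)) {c : Fin n →₀ ℕ} (hc : c.degree = ℓ0 + ℓ) :
    coeff c (psComp F u) - coeff c (psComp F g) =
      coeff c (∑ j, MvPolynomial.aeval X (MvPolynomial.pderiv j (homComp (ℓ0 + 1) F)) * v j) := by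
  have term : ∀ d, coeff c (MvPolynomial.aeval u (homComp d F)) -
      coeff c (MvPolynomial.aeval g (homComp d F)) =
        if d = ℓ0 + 1 then
          coeff c (∑ j, MvPolynomial.aeval X (MvPolynomial.pderiv j (homComp (ℓ0 + 1) F)) * v j)
        else 0 := by
    intro d
    by_cases hd : d ≤ ℓ0
    · simp [hF d hd, show d ≠ ℓ0 + 1 by omega]
    have lin := MvPolynomial.aeval_sub_aeval_sub_sum_pderiv_mem_orderIdeal
      (homComp_isHomogeneous d F) hℓ hu hv huv
    rw [← map_sub, coeff_eq_of_sub_mem_orderIdeal lin (by omega)]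
    split_ifs with hd1
    · rw [hd1]
    · exact coeff_eq_zero_of_mem_orderIdeal (MvPolynomial.sum_aeval_pderiv_mul_mem_orderIdeal
        (homComp_isHomogeneous d F) X_mem_orderIdeal_one hv) (by omega)
  rw [coeff_psComp, coeff_psComp, ← Finset.sum_sub_distrib, Finset.sum_congr rfl fun d _ => term d,
    Finset.sum_ite_eq', if_pos (Finset.mem_range.2 (by omega))]

theorem homComp_psComp_sub_homComp_psComp {ℓ0 ℓ : ℕ} {F : MvPowerSeries (Fin n) ℂ}
    (hF : ∀ m ≤ ℓ0, homComp m F = 0) (hℓ : 2 ≤ ℓ) {u : Fin n → MvPowerSeries (Fin n) ℂ}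
    (hu0 : ∀ j, constantCoeff (u j) = 0) (hu : ∀ j, u j - X j ∈ orderIdeal 2) :
    homComp (ℓ0 + ℓ) (psComp F u) -
        homComp (ℓ0 + ℓ) (psComp F fun j => polyPS (∑ k ∈ Finset.Icc 1 (ℓ - 1), homComp k (u j))) =
      ∑ j, MvPolynomial.pderiv j (homComp (ℓ0 + 1) F) * homComp ℓ (u j) := by
  have hP : (∑ j, MvPolynomial.pderiv j (homComp (ℓ0 + 1) F) * homComp ℓ (u j)).IsHomogeneous
      (ℓ0 + ℓ) := MvPolynomial.IsHomogeneous.sum _ _ _ fun j _ => by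
    have h := ((homComp_isHomogeneous (ℓ0 + 1) F).pderiv (i := j)).mul
      (homComp_isHomogeneous ℓ (u j))
    rwa [Nat.add_sub_cancel] at h
  rw [← homComp_sub, ← homComp_polyPS hP]
  refine homComp_congr fun c hc => ?_
  rw [map_sub, coeff_psComp_sub_coeff_psComp hF hℓ hu
    (fun j => polyPS_homComp_mem_orderIdeal ℓ (u j))
    (fun j => sub_truncation_mem_orderIdeal (hu0 j) ℓ) hc]
  simp only [polyPS, map_sum, map_mul]

end Composition

theorem stmt17_general (n ℓ0 : ℕ) (A : Fin n → MvPowerSeries (Fin n) ℂ)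
    (hlow : ∀ i, ∀ m, m ≤ ℓ0 → homComp m (A i) = 0)
    (A0 : Fin n → MvPolynomial (Fin n) ℂ)
    (hA0 : ∀ i, A0 i = homComp (ℓ0 + 1) (A i))
    (B : ℕ → ((Fin n → MvPolynomial (Fin n) ℂ) →ₗ[ℂ] (Fin n → MvPolynomial (Fin n) ℂ)))
    (hB : ∀ ℓ, ∀ P : Fin n → MvPolynomial (Fin n) ℂ, (∀ ν, (P ν).IsHomogeneous ℓ) →
      B ℓ (fun i => ∑ j, MvPolynomial.pderiv j (A0 i) * P j) = P)
    (pt : ℕ → (Fin n → MvPowerSeries (Fin n) ℂ) → (Fin n → MvPolynomial (Fin n) ℂ))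
    (hpt1 : ∀ b, pt 1 b = fun ν => MvPolynomial.X ν)
    (hptrec : ∀ b : Fin n → MvPowerSeries (Fin n) ℂ, ∀ ℓ, 2 ≤ ℓ →
      pt ℓ b = B ℓ (fun i =>
        homComp (ℓ0 + ℓ) (b i) -
          homComp (ℓ0 + ℓ)
            (psComp (A i) (fun ν => polyPS (∑ kk ∈ Finset.Icc 1 (ℓ - 1), pt kk b ν))))) :
    ∀ (b u : Fin n → MvPowerSeries (Fin n) ℂ),
      (∀ i, IsConvPS (b i)) → (∀ i, IsConvPS (u i)) →
      (∀ i, MvPowerSeries.constantCoeff (σ := Fin n) (R := ℂ) (u i) = 0) →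
      -- u is tangent to the identity
      (∀ i j, MvPowerSeries.coeff (R := ℂ) (Finsupp.single j 1) (u i) = if i = j then 1 else 0) →
      (∀ i, psComp (A i) u = b i) →
      ∀ ℓ, 1 ≤ ℓ → ∀ ν, homComp ℓ (u ν) = pt ℓ b ν := by
  intro b u _ _ hu0 hutan hsol ℓ
  have hu : ∀ j, u j - MvPowerSeries.X j ∈ MvPowerSeries.orderIdeal 2 := fun j =>
    MvPowerSeries.sub_X_mem_orderIdeal_two (hu0 j) (hutan j)
  induction ℓ using Nat.strong_induction_on with
  | _ ℓ IH =>
  intro hℓ ν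
  obtain rfl | hℓ2 := hℓ.eq_or_lt
  · rw [hpt1, homComp_eq_of_sub_mem_orderIdeal (hu ν), homComp_one_X]
  have lower : ∀ j, ∑ k ∈ Finset.Icc 1 (ℓ - 1), pt k b j =
      ∑ k ∈ Finset.Icc 1 (ℓ - 1), homComp k (u j) := fun j =>
    Finset.sum_congr rfl fun k hk => (IH k (by grind) (Finset.mem_Icc.1 hk).1 j).symm
  have linearization : (fun i => homComp (ℓ0 + ℓ) (b i) - homComp (ℓ0 + ℓ)
      (psComp (A i) fun j => polyPS (∑ k ∈ Finset.Icc 1 (ℓ - 1), homComp k (u j)))) =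
      fun i => ∑ j, MvPolynomial.pderiv j (A0 i) * homComp ℓ (u j) := funext fun i => by
    rw [← hsol i, hA0 i]
    exact homComp_psComp_sub_homComp_psComp (hlow i) hℓ2 hu0 hu
  simp only [hptrec b ℓ hℓ2, lower, linearization, hB ℓ _ fun j => homComp_isHomogeneous ℓ (u j)]

/-- the recursively defined polynomial maps `p̃_ℓ` recover the homogeneous
parts of any biholomorphic solution tangent to the identity of `A ∘ u = b`.  Here `A` has
lowest-order homogeneous terms `A₀` all of degree `ℓ₀+1` with `det A₀′ ≢ 0`, and the
`B ℓ` are left inverses to multiplication by `A₀′` on tuples of homogeneous polynomials. -/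
theorem stmt17 (n ℓ0 : ℕ) (A : Fin n → MvPowerSeries (Fin n) ℂ)
    (hconvA : ∀ i, IsConvPS (A i))
    (hlow : ∀ i, ∀ m, m ≤ ℓ0 → homComp m (A i) = 0)
    (A0 : Fin n → MvPolynomial (Fin n) ℂ)
    (hA0 : ∀ i, A0 i = homComp (ℓ0 + 1) (A i))
    (hA0rank : Matrix.det (Matrix.of fun i j => MvPolynomial.pderiv j (A0 i)) ≠ 0)
    (B : ℕ → ((Fin n → MvPolynomial (Fin n) ℂ) →ₗ[ℂ] (Fin n → MvPolynomial (Fin n) ℂ)))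
    (hB : ∀ ℓ, ∀ P : Fin n → MvPolynomial (Fin n) ℂ, (∀ ν, (P ν).IsHomogeneous ℓ) →
      B ℓ (fun i => ∑ j, MvPolynomial.pderiv j (A0 i) * P j) = P)
    (pt : ℕ → (Fin n → MvPowerSeries (Fin n) ℂ) → (Fin n → MvPolynomial (Fin n) ℂ))
    (hpt1 : ∀ b, pt 1 b = fun ν => MvPolynomial.X ν)
    (hptrec : ∀ b : Fin n → MvPowerSeries (Fin n) ℂ, ∀ ℓ, 2 ≤ ℓ →
      pt ℓ b = B ℓ (fun i =>
        homComp (ℓ0 + ℓ) (b i) -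
          homComp (ℓ0 + ℓ)
            (psComp (A i) (fun ν => polyPS (∑ kk ∈ Finset.Icc 1 (ℓ - 1), pt kk b ν))))) :
    ∀ (b u : Fin n → MvPowerSeries (Fin n) ℂ),
      (∀ i, IsConvPS (b i)) → (∀ i, IsConvPS (u i)) →
      (∀ i, MvPowerSeries.constantCoeff (σ := Fin n) (R := ℂ) (u i) = 0) →
      -- u is tangent to the identity
      (∀ i j, MvPowerSeries.coeff (R := ℂ) (Finsupp.single j 1) (u i) = if i = j then 1 else 0) →
      (∀ i, psComp (A i) u = b i) →
      ∀ ℓ, 1 ≤ ℓ → ∀ ν, homComp ℓ (u ν) = pt ℓ b ν :=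
  stmt17_general n ℓ0 A hlow A0 hA0 B hB pt hpt1 hptrec
end
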